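/- Let A : Λ^{k+1}ℝ^n → Λ^{k+1}ℝ^n be a linear map satisfying the Legendre ellipticity condition ⟨Aξ; ξ⟩ ≥ γ|ξ|² for all ξ ∈ Λ^{k+1}ℝ^n with γ > 0. Define the linear map Ã on Λ^k ℝ^n ⊗ ℝ^n by ⟨Ã(b₁⊗a₁); b₂⊗a₂⟩ = ⟨A(a₁∧b₁); a₂∧b₂⟩ + ⟨a₁⌟b₁; a₂⌟b₂⟩, extended by bilinearity. Then Ã satisfies the Legendre–Hadamard condition: ⟨Ã(b⊗a); b⊗a⟩ ≥ min(γ,1)·|a|²|b|² for all a ∈ ℝ^n and b ∈ Λ^k ℝ^n. -/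

import Mathlib

/-!
Everything reduces to the Pythagorean identity `|a ∧ b|² + |a ⌟ b|² = |a|² |b|²`. Since `a ⌟ ·`
is the adjoint of `a ∧ ·`, its left side is `⟨b, a ⌟ (a ∧ b) + a ∧ (a ⌟ b)⟩`, and this
anticommutator is `|a|² b`: the diagonal terms give `|a|² b`, the others cancel in pairs by
the sign rule for reordering two indices. Ellipticity of `A` then applies to the
`(k+1)`-form `a ∧ b`, and `min γ 1` bounds both coefficients of the two squares.
-/

open Finset
open scoped InnerProductSpace

/-- Model of `Λ^k ℝ^n`: coefficients indexed by subsets of `Fin n`, with the Euclidean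
inner product. A `k`-form is supported on subsets of cardinality `k`. -/
def IsDeg {n : ℕ} (k : ℕ) (b : EuclideanSpace ℝ (Finset (Fin n))) : Prop :=
  ∀ S : Finset (Fin n), S.card ≠ k → b S = 0

/-- Exterior product of the 1-form dual to `a` with the form `b`. -/
noncomputable def wedge1 {n : ℕ} (a : EuclideanSpace ℝ (Fin n))
    (b : EuclideanSpace ℝ (Finset (Fin n))) : EuclideanSpace ℝ (Finset (Fin n)) :=
  WithLp.toLp 2 (fun T => ∑ i : Fin n, if i ∈ T then
    (-1 : ℝ) ^ (T.filter (fun j => j < i)).card * a i * b (T.erase i) else 0)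

/-- Interior product (contraction) of the vector `a` with the form `b`. -/
noncomputable def inter1 {n : ℕ} (a : EuclideanSpace ℝ (Fin n))
    (b : EuclideanSpace ℝ (Finset (Fin n))) : EuclideanSpace ℝ (Finset (Fin n)) :=
  WithLp.toLp 2 (fun S => ∑ i : Fin n, if i ∈ S then 0 else
    (-1 : ℝ) ^ (S.filter (fun j => j < i)).card * a i * b (insert i S))

section LtSign

variable {α : Type*} [LinearOrder α]

/-- `e_i ∧ e_S = ltSign i S • e_(insert i S)` for `i ∉ S`. -/
noncomputable def ltSign (i : α) (S : Finset α) : ℝ :=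
  (-1) ^ #{j ∈ S | j < i}

theorem ltSign_mul_self (i : α) (S : Finset α) : ltSign i S * ltSign i S = 1 := by
  rw [ltSign, ← pow_add]
  exact (Even.add_self _).neg_one_pow

theorem ltSign_insert_of_not_lt {i j : α} (S : Finset α) (h : ¬ j < i) :
    ltSign i (insert j S) = ltSign i S := by
  rw [ltSign, ltSign, filter_insert, if_neg h]

theorem ltSign_insert_of_lt {i j : α} {S : Finset α} (h : j < i) (hj : j ∉ S) :
    ltSign i (insert j S) = -ltSign i S := by
  rw [ltSign, ltSign, filter_insert, if_pos h, card_insert_of_notMem (by simp [hj]), pow_succ,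
    mul_neg_one]

theorem ltSign_mul_ltSign_insert {i j : α} {S : Finset α} (hi : i ∉ S) (hj : j ∈ S) :
    ltSign i S * ltSign j (insert i S) = -(ltSign j S * ltSign i (S.erase j)) := by
  have hij : i ≠ j := fun h => hi (h ▸ hj)
  obtain ⟨R, hjR, rfl⟩ : ∃ R, j ∉ R ∧ S = insert j R := ⟨S.erase j, by simp, by simp [hj]⟩
  rw [erase_insert hjR, insert_comm i j, ltSign_insert_of_not_lt _ (lt_irrefl j),
    ltSign_insert_of_not_lt R (lt_irrefl j)]
  rcases hij.lt_or_gt with h | h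
  · rw [ltSign_insert_of_not_lt R (not_lt.2 h.le),
      ltSign_insert_of_lt h fun hiR => hi (mem_insert_of_mem hiR)]
    ring
  · rw [ltSign_insert_of_lt h hjR, ltSign_insert_of_not_lt R (not_lt.2 h.le)]
    ring

end LtSign

theorem Finset.sum_sum_mem_eq_sum_sum_compl_insert {α M : Type*} [Fintype α] [DecidableEq α]
    [AddCommMonoid M] (g : α → Finset α → M) :
    ∑ T, ∑ i ∈ T, g i T = ∑ S, ∑ i ∈ Sᶜ, g i (insert i S) := by
  rw [sum_comm' (t' := univ) (s' := fun i => univ.filter (fun T : Finset α => i ∈ T)) (by simp),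
    sum_comm' (t' := univ) (s' := fun i => univ.filter (fun S : Finset α => i ∉ S)) (by simp)]
  refine sum_congr rfl fun i _ => ?_
  refine sum_nbij' (fun T => T.erase i) (insert i) ?_ ?_ ?_ ?_ ?_ <;> intro T hT <;>
    simp_all

section Forms

variable {n : ℕ}

theorem wedge1_apply (a : EuclideanSpace ℝ (Fin n)) (b : EuclideanSpace ℝ (Finset (Fin n)))
    (T : Finset (Fin n)) : wedge1 a b T = ∑ i ∈ T, ltSign i T * a i * b (T.erase i) := by
  rw [← Fintype.sum_ite_mem]
  rfl

theorem inter1_apply (a : EuclideanSpace ℝ (Fin n)) (b : EuclideanSpace ℝ (Finset (Fin n)))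
    (S : Finset (Fin n)) : inter1 a b S = ∑ i ∈ Sᶜ, ltSign i S * a i * b (insert i S) := by
  rw [← Fintype.sum_ite_mem]
  simp only [mem_compl, ite_not]
  rfl

theorem isDeg_wedge1 {k : ℕ} (a : EuclideanSpace ℝ (Fin n))
    {b : EuclideanSpace ℝ (Finset (Fin n))} (hb : IsDeg k b) : IsDeg (k + 1) (wedge1 a b) := by
  intro T hT
  rw [wedge1_apply]
  refine sum_eq_zero fun i hi => ?_
  rw [hb _ (by rw [card_erase_of_mem hi]; have := card_pos.2 ⟨i, hi⟩; omega), mul_zero]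

theorem inner_wedge1 (a : EuclideanSpace ℝ (Fin n)) (b c : EuclideanSpace ℝ (Finset (Fin n))) :
    ⟪wedge1 a b, c⟫_ℝ = ⟪b, inter1 a c⟫_ℝ := by
  simp only [PiLp.inner_apply, RCLike.inner_apply, conj_trivial, wedge1_apply, inter1_apply,
    sum_mul, mul_sum]
  rw [sum_sum_mem_eq_sum_sum_compl_insert]
  refine sum_congr rfl fun S _ => sum_congr rfl fun i hi => ?_
  rw [mem_compl] at hi
  rw [erase_insert hi, ltSign_insert_of_not_lt S (lt_irrefl i)]
  ring

theorem inter1_wedge1_apply (a : EuclideanSpace ℝ (Fin n)) (b : EuclideanSpace ℝ (Finset (Fin n)))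
    (S : Finset (Fin n)) :
    inter1 a (wedge1 a b) S = ∑ i ∈ Sᶜ, a i ^ 2 * b S + ∑ i ∈ Sᶜ, ∑ j ∈ S,
      ltSign i S * ltSign j (insert i S) * a i * a j * b (insert i (S.erase j)) := by
  rw [inter1_apply, ← sum_add_distrib]
  refine sum_congr rfl fun i hi => ?_
  rw [mem_compl] at hi
  rw [wedge1_apply, sum_insert hi, erase_insert hi, ltSign_insert_of_not_lt S (lt_irrefl i),
    mul_add, mul_sum]
  congr 1
  · linear_combination a i ^ 2 * b S * ltSign_mul_self i S
  · refine sum_congr rfl fun j hj => ?_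
    rw [erase_insert_of_ne (ne_of_mem_of_not_mem hj hi).symm]
    ring

theorem wedge1_inter1_apply (a : EuclideanSpace ℝ (Fin n)) (b : EuclideanSpace ℝ (Finset (Fin n)))
    (S : Finset (Fin n)) :
    wedge1 a (inter1 a b) S = ∑ j ∈ S, a j ^ 2 * b S + ∑ i ∈ Sᶜ, ∑ j ∈ S,
      ltSign j S * ltSign i (S.erase j) * a i * a j * b (insert i (S.erase j)) := by
  rw [wedge1_apply, sum_comm, ← sum_add_distrib]
  refine sum_congr rfl fun j hj => ?_
  have hS : insert j (S.erase j) = S := insert_erase hj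
  rw [inter1_apply, compl_erase, sum_insert (by simpa using hj), hS, mul_add, mul_sum]
  congr 1
  · nth_rw 1 [← hS]
    rw [ltSign_insert_of_not_lt _ (lt_irrefl j)]
    linear_combination a j ^ 2 * b S * ltSign_mul_self j (S.erase j)
  · refine sum_congr rfl fun i _ => ?_
    ring

theorem inter1_wedge1_add_wedge1_inter1 (a : EuclideanSpace ℝ (Fin n))
    (b : EuclideanSpace ℝ (Finset (Fin n))) :
    inter1 a (wedge1 a b) + wedge1 a (inter1 a b) = ‖a‖ ^ 2 • b := by
  ext S
  rw [PiLp.add_apply, inter1_wedge1_apply, wedge1_inter1_apply, add_add_add_comm,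
    sum_compl_add_sum, ← sum_add_distrib, sum_eq_zero (s := Sᶜ) fun i hi => ?_, add_zero,
    PiLp.smul_apply, smul_eq_mul, EuclideanSpace.real_norm_sq_eq, sum_mul]
  rw [← sum_add_distrib]
  refine sum_eq_zero fun j hj => ?_
  rw [ltSign_mul_ltSign_insert (mem_compl.1 hi) hj]
  ring

theorem norm_wedge1_sq_add_norm_inter1_sq (a : EuclideanSpace ℝ (Fin n))
    (b : EuclideanSpace ℝ (Finset (Fin n))) :
    ‖wedge1 a b‖ ^ 2 + ‖inter1 a b‖ ^ 2 = ‖a‖ ^ 2 * ‖b‖ ^ 2 := by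
  rw [← real_inner_self_eq_norm_sq (wedge1 a b), ← real_inner_self_eq_norm_sq (inter1 a b),
    inner_wedge1, ← inner_wedge1 a (inter1 a b) b, real_inner_comm b, ← inner_add_right,
    inter1_wedge1_add_wedge1_inter1, real_inner_smul_right, real_inner_self_eq_norm_sq]

end Forms

theorem legendre_hadamard_of_legendre_general {n k : ℕ} (γ : ℝ)
    (A : EuclideanSpace ℝ (Finset (Fin n)) →ₗ[ℝ] EuclideanSpace ℝ (Finset (Fin n)))
    (hA : ∀ ξ : EuclideanSpace ℝ (Finset (Fin n)), IsDeg (k + 1) ξ → γ * ‖ξ‖ ^ 2 ≤ ⟪A ξ, ξ⟫_ℝ)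
    (Atil : EuclideanSpace ℝ (Finset (Fin n)) → EuclideanSpace ℝ (Fin n) → ℝ)
    (hAtil : ∀ (b : EuclideanSpace ℝ (Finset (Fin n))) (a : EuclideanSpace ℝ (Fin n)),
      Atil b a = ⟪A (wedge1 a b), wedge1 a b⟫_ℝ + ⟪inter1 a b, inter1 a b⟫_ℝ) :
    ∀ (a : EuclideanSpace ℝ (Fin n)) (b : EuclideanSpace ℝ (Finset (Fin n))), IsDeg k b →
      min γ 1 * (‖a‖ ^ 2 * ‖b‖ ^ 2) ≤ Atil b a := by
  intro a b hb
  have hwedge := hA _ (isDeg_wedge1 a hb)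
  rw [hAtil, real_inner_self_eq_norm_sq, ← norm_wedge1_sq_add_norm_inter1_sq, mul_add]
  gcongr
  · exact (mul_le_mul_of_nonneg_right (min_le_left γ 1) (sq_nonneg _)).trans hwedge
  · exact mul_le_of_le_one_left (sq_nonneg _) (min_le_right γ 1)

/-- If `A` is Legendre elliptic with constant `γ > 0` on `Λ^{k+1}ℝ^n` and `Ã` is the map on
`Λ^k ℝ^n ⊗ ℝ^n` defined on elementary tensors by
`⟨Ã(b⊗a); b⊗a⟩ = ⟨A(a∧b); a∧b⟩ + ⟨a⌟b; a⌟b⟩`, then `Ã` satisfies the Legendre–Hadamard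
condition `⟨Ã(b⊗a); b⊗a⟩ ≥ min(γ,1)·|a|²|b|²`.  Here `Atil b a` denotes the quadratic form
`⟨Ã(b⊗a); b⊗a⟩` evaluated on the elementary tensor `b ⊗ a`. -/
theorem legendre_hadamard_of_legendre {n k : ℕ} (γ : ℝ) (hγ : 0 < γ)
    (A : EuclideanSpace ℝ (Finset (Fin n)) →ₗ[ℝ] EuclideanSpace ℝ (Finset (Fin n)))
    (hA : ∀ ξ : EuclideanSpace ℝ (Finset (Fin n)), IsDeg (k + 1) ξ → γ * ‖ξ‖ ^ 2 ≤ ⟪A ξ, ξ⟫_ℝ)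
    (Atil : EuclideanSpace ℝ (Finset (Fin n)) → EuclideanSpace ℝ (Fin n) → ℝ)
    (hAtil : ∀ (b : EuclideanSpace ℝ (Finset (Fin n))) (a : EuclideanSpace ℝ (Fin n)),
      Atil b a = ⟪A (wedge1 a b), wedge1 a b⟫_ℝ + ⟪inter1 a b, inter1 a b⟫_ℝ) :
    ∀ (a : EuclideanSpace ℝ (Fin n)) (b : EuclideanSpace ℝ (Finset (Fin n))), IsDeg k b →
      min γ 1 * (‖a‖ ^ 2 * ‖b‖ ^ 2) ≤ Atil b a :=
  legendre_hadamard_of_legendre_general γ A hA Atil hAtil
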